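/- With the setup of Theorem on the combinatorial description, V⁺ = ⋃_{R > 0} ⋂_{R' > R} β^{R'}(U⁺): every element of V⁺ lies in β^{R'}(U⁺) for all sufficiently large R' > 0, and conversely. -/

import Mathlib

open Classical

/-- `Z_i = ⋃ {S ∈ 𝒮 : i ∉ S}`. -/
def Zset (n : ℕ) (𝒮 : Set (Set (Fin n))) (i : Fin n) : Set (Fin n) :=
  ⋃₀ {S ∈ 𝒮 | i ∉ S}

/-- `α^ε_i(z) = z_i + ε ∑_{j ∉ Z_i} z_j`. -/
noncomputable def alphaMap (F : Subfield ℝ) (n : ℕ) (𝒮 : Set (Set (Fin n))) (ε : F)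
    (z : Fin n → F) : Fin n → F :=
  fun i => z i + ε * ∑ j ∈ Finset.univ.filter (fun j => j ∉ Zset n 𝒮 i), z j

/-- `P_i = ⋃ {S ∈ 𝒮 : i ∈ E^≥_S}` where `E^≥_S = Sᶜ ∪ E^>_S`. -/
def Pset (n : ℕ) (𝒮 : Set (Set (Fin n))) (Egt : Set (Fin n) → Set (Fin n)) (i : Fin n) :
    Set (Fin n) :=
  ⋃₀ {S ∈ 𝒮 | i ∈ Sᶜ ∪ Egt S}

/-- `β^R_i(y) = y_i - R ∑_{j ∉ P_i, P_j ≠ P_i} y_j`. -/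
noncomputable def betaMap (F : Subfield ℝ) (n : ℕ) (𝒮 : Set (Set (Fin n)))
    (Egt : Set (Fin n) → Set (Fin n)) (R : F) (y : Fin n → F) : Fin n → F :=
  fun i => y i - R * ∑ j ∈ Finset.univ.filter
    (fun j => j ∉ Pset n 𝒮 Egt i ∧ Pset n 𝒮 Egt j ≠ Pset n 𝒮 Egt i), y j

/-- `U⁺ = ⋃_{S ∈ 𝒮} F_{>0}^S · 0^{Sᶜ}`. -/
def Uset (F : Subfield ℝ) (n : ℕ) (𝒮 : Set (Set (Fin n))) : Set (Fin n → F) :=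
  {x | ∃ S ∈ 𝒮, (∀ i ∈ S, 0 < x i) ∧ ∀ i ∉ S, x i = 0}

/-- `V⁺ = ⋃_{S ∈ 𝒮} 0^{E⁰_S} · F_{>0}^{E^>_S} · F^{E^*_S}` (zero off `S`, strictly
positive on `E^>_S`, arbitrary on `E^*_S`). -/
def Vset (F : Subfield ℝ) (n : ℕ) (𝒮 : Set (Set (Fin n)))
    (Egt : Set (Fin n) → Set (Fin n)) : Set (Fin n → F) :=
  {x | ∃ S ∈ 𝒮, (∀ i ∉ S, x i = 0) ∧ ∀ i ∈ Egt S, 0 < x i}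

/-!
If `j` occurs in the sum defining `β^R_i`, then `j ∉ P_i`, so every `S` entering `P_i` also
enters `P_j`, and `P_i ⊊ P_j`. Hence `β^R` is unitriangular for a well-founded order, and
every `x` has a preimage `y`, built by well-founded recursion. For `y` supported on `T ∈ 𝒮`
and `i ∈ Tᶜ ∪ E^>_T` we have `T ⊆ P_i`, so `β^R` fixes `y_i`; this gives `β^R(U⁺) ⊆ V⁺`.
Conversely, if `x ∈ V⁺` is witnessed by `S`, its preimage `y` vanishes off `S` and equals `x`
on `E^>_S`. For `i ∈ S \ E^>_S`, (RV1) makes `P_i` one of the sets it is the union of, so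
`S ⊄ P_i`, and (RV2) yields `j ∈ E^>_S` occurring in the sum at `i`. Inductively
`y_i ≥ x_i + R x_j`, which is positive once `R` is large.
-/

theorem WellFounded.exists_eq_add_mul_sum {ι K : Type*} [Semiring K] {r : ι → ι → Prop}
    (hr : WellFounded r) (D : ι → Finset ι) (hD : ∀ i, ∀ j ∈ D i, r j i) (x : ι → K) (c : K) :
    ∃ y : ι → K, ∀ i, y i = x i + c * ∑ j ∈ D i, y j :=
  ⟨hr.fix fun i y => x i + c * ∑ j ∈ (D i).attach, y j (hD i j j.2), fun i => by
    rw [hr.fix_eq]; simp only [Finset.sum_attach]⟩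

theorem eventually_forall_add_mul_pos {ι K : Type*} [Finite ι] [Field K] [LinearOrder K]
    [IsStrictOrderedRing K] (x : ι → K) {s : Set ι} (hs : ∀ j ∈ s, 0 < x j) :
    ∀ᶠ R in Filter.atTop, ∀ i, ∀ j ∈ s, 0 < x i + R * x j := by
  refine Filter.eventually_all.2 fun i => Filter.eventually_all.2 fun j => ?_
  by_cases hj : j ∈ s
  · have hlim : Filter.Tendsto (fun R => x i + R * x j) Filter.atTop Filter.atTop :=
      Filter.tendsto_atTop_add_const_left _ _ (Filter.tendsto_id.atTop_mul_const (hs j hj))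
    exact (hlim.eventually_gt_atTop 0).mono fun _ h _ => h
  · exact .of_forall fun _ h => absurd h hj

noncomputable def betaIndices (n : ℕ) (𝒮 : Set (Set (Fin n))) (Egt : Set (Fin n) → Set (Fin n))
    (i : Fin n) : Finset (Fin n) :=
  Finset.univ.filter fun j => j ∉ Pset n 𝒮 Egt i ∧ Pset n 𝒮 Egt j ≠ Pset n 𝒮 Egt i

section Beta

variable {F : Subfield ℝ} {n : ℕ} {𝒮 : Set (Set (Fin n))} {Egt : Set (Fin n) → Set (Fin n)}
  {S : Set (Fin n)} {R : F} {x y : Fin n → F} {i j : Fin n}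

theorem betaMap_apply :
    betaMap F n 𝒮 Egt R y i = y i - R * ∑ j ∈ betaIndices n 𝒮 Egt i, y j := rfl

theorem subset_Pset (hS : S ∈ 𝒮) (hi : i ∈ Sᶜ ∪ Egt S) : S ⊆ Pset n 𝒮 Egt i :=
  fun _ hx => Set.mem_sUnion.2 ⟨S, ⟨hS, hi⟩, hx⟩

theorem Pset_ssubset_of_mem_betaIndices (hj : j ∈ betaIndices n 𝒮 Egt i) :
    Pset n 𝒮 Egt i ⊂ Pset n 𝒮 Egt j := by
  obtain ⟨hjP, hne⟩ := (Finset.mem_filter.1 hj).2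
  refine (Set.sUnion_subset fun S hS => ?_).ssubset_of_ne (Ne.symm hne)
  exact subset_Pset hS.1 (Or.inl fun hjS => hjP (subset_Pset hS.1 hS.2 hjS))

theorem wellFounded_Pset_ssubset :
    WellFounded fun j i : Fin n => Pset n 𝒮 Egt i ⊂ Pset n 𝒮 Egt j :=
  InvImage.wf (Pset n 𝒮 Egt) wellFounded_gt

theorem Pset_mem (hempty : ∅ ∈ 𝒮) (hcup : ∀ S₁ ∈ 𝒮, ∀ S₂ ∈ 𝒮, S₁ ∪ S₂ ∈ 𝒮)
    (hRV1 : ∀ S₁ ∈ 𝒮, ∀ S₂ ∈ 𝒮,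
      (S₁ ∪ S₂)ᶜ ∪ Egt (S₁ ∪ S₂) = (S₁ᶜ ∪ Egt S₁) ∩ (S₂ᶜ ∪ Egt S₂)) (i : Fin n) :
    Pset n 𝒮 Egt i ∈ {S ∈ 𝒮 | i ∈ Sᶜ ∪ Egt S} := by
  have hsup : SupClosed {S ∈ 𝒮 | i ∈ Sᶜ ∪ Egt S} := fun S₁ ⟨hS₁, hi₁⟩ S₂ ⟨hS₂, hi₂⟩ =>
    ⟨hcup S₁ hS₁ S₂ hS₂, (hRV1 S₁ hS₁ S₂ hS₂).symm ▸ ⟨hi₁, hi₂⟩⟩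
  exact hsup.sSup_mem (Set.toFinite _) ⟨hempty, Or.inl (Set.notMem_empty i)⟩ subset_rfl

theorem exists_mem_Egt_mem_betaIndices (hempty : ∅ ∈ 𝒮)
    (hcup : ∀ S₁ ∈ 𝒮, ∀ S₂ ∈ 𝒮, S₁ ∪ S₂ ∈ 𝒮)
    (hRV1 : ∀ S₁ ∈ 𝒮, ∀ S₂ ∈ 𝒮,
      (S₁ ∪ S₂)ᶜ ∪ Egt (S₁ ∪ S₂) = (S₁ᶜ ∪ Egt S₁) ∩ (S₂ᶜ ∪ Egt S₂))
    (hRV2 : ∀ S₁ ∈ 𝒮, ∀ S₂ ∈ 𝒮, ¬ S₂ ⊆ S₁ → (Egt S₂ \ S₁).Nonempty)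
    (hS : S ∈ 𝒮) (hiS : i ∈ S) (hiE : i ∉ Egt S) :
    ∃ j ∈ Egt S, j ∈ betaIndices n 𝒮 Egt i := by
  obtain ⟨hP, hiP⟩ := Pset_mem hempty hcup hRV1 i
  have hSP : ¬ S ⊆ Pset n 𝒮 Egt i := fun hsub => by
    have h := hRV1 S hS _ hP
    rw [Set.union_eq_self_of_subset_left hsub] at h
    rcases (h ▸ hiP).1 with hi | hi
    exacts [hi hiS, hiE hi]
  obtain ⟨j, hjE, hjP⟩ := hRV2 _ hP S hS hSP
  refine ⟨j, hjE, Finset.mem_filter.2 ⟨Finset.mem_univ j, hjP, fun h => hSP ?_⟩⟩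
  exact h ▸ subset_Pset hS (Or.inr hjE)

theorem betaMap_apply_eq_self (hS : S ∈ 𝒮) (hy : ∀ j ∉ S, y j = 0) (hi : i ∈ Sᶜ ∪ Egt S) :
    betaMap F n 𝒮 Egt R y i = y i := by
  rw [betaMap_apply, Finset.sum_eq_zero, mul_zero, sub_zero]
  exact fun j hj => hy j fun hjS => (Finset.mem_filter.1 hj).2.1 (subset_Pset hS hi hjS)

theorem exists_betaMap_eq (R : F) (x : Fin n → F) : ∃ y, betaMap F n 𝒮 Egt R y = x := by
  obtain ⟨y, hy⟩ := wellFounded_Pset_ssubset.exists_eq_add_mul_sum (betaIndices n 𝒮 Egt)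
    (fun _ _ => Pset_ssubset_of_mem_betaIndices) x R
  exact ⟨y, funext fun i => by rw [betaMap_apply, hy i, add_sub_cancel_right]⟩

theorem eq_zero_of_betaMap_eq_zero (hS : S ∈ 𝒮) (h : ∀ i ∉ S, betaMap F n 𝒮 Egt R y i = 0) :
    ∀ i ∉ S, y i = 0 := by
  intro i
  induction i using (wellFounded_Pset_ssubset (𝒮 := 𝒮) (Egt := Egt)).induction with
  | _ i ih =>
    intro hi
    have hsum : ∑ j ∈ betaIndices n 𝒮 Egt i, y j = 0 := Finset.sum_eq_zero fun j hj =>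
      ih j (Pset_ssubset_of_mem_betaIndices hj)
        fun hjS => (Finset.mem_filter.1 hj).2.1 (subset_Pset hS (Or.inl hi) hjS)
    simpa [betaMap_apply, hsum] using h i hi

theorem mem_Uset_of_betaMap_eq (hempty : ∅ ∈ 𝒮)
    (hcup : ∀ S₁ ∈ 𝒮, ∀ S₂ ∈ 𝒮, S₁ ∪ S₂ ∈ 𝒮)
    (hRV1 : ∀ S₁ ∈ 𝒮, ∀ S₂ ∈ 𝒮,
      (S₁ ∪ S₂)ᶜ ∪ Egt (S₁ ∪ S₂) = (S₁ᶜ ∪ Egt S₁) ∩ (S₂ᶜ ∪ Egt S₂))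
    (hRV2 : ∀ S₁ ∈ 𝒮, ∀ S₂ ∈ 𝒮, ¬ S₂ ⊆ S₁ → (Egt S₂ \ S₁).Nonempty)
    (hS : S ∈ 𝒮) (hx0 : ∀ i ∉ S, x i = 0) (hxpos : ∀ i ∈ Egt S, 0 < x i) (hR : 0 ≤ R)
    (hRx : ∀ i, ∀ j ∈ Egt S, 0 < x i + R * x j) (hy : betaMap F n 𝒮 Egt R y = x) :
    y ∈ Uset F n 𝒮 := by
  have hy0 : ∀ i ∉ S, y i = 0 :=
    eq_zero_of_betaMap_eq_zero hS fun i hi => (congrFun hy i).trans (hx0 i hi)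
  have hyx : ∀ i ∈ Egt S, y i = x i := fun i hi =>
    (betaMap_apply_eq_self hS hy0 (Or.inr hi)).symm.trans (congrFun hy i)
  refine ⟨S, hS, fun i => ?_, hy0⟩
  induction i using (wellFounded_Pset_ssubset (𝒮 := 𝒮) (Egt := Egt)).induction with
  | _ i ih =>
    intro hiS
    by_cases hiE : i ∈ Egt S
    · exact hyx i hiE ▸ hxpos i hiE
    obtain ⟨j, hjE, hj⟩ := exists_mem_Egt_mem_betaIndices hempty hcup hRV1 hRV2 hS hiS hiE
    have hnonneg : ∀ k ∈ betaIndices n 𝒮 Egt i, 0 ≤ y k := fun k hk => by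
      by_cases hkS : k ∈ S
      · exact (ih k (Pset_ssubset_of_mem_betaIndices hk) hkS).le
      · exact (hy0 k hkS).ge
    have hyi : y i = x i + R * ∑ k ∈ betaIndices n 𝒮 Egt i, y k := by
      rw [← congrFun hy i, betaMap_apply, sub_add_cancel]
    calc 0 < x i + R * x j := hRx i j hjE
      _ = x i + R * y j := by rw [hyx j hjE]
      _ ≤ x i + R * ∑ k ∈ betaIndices n 𝒮 Egt i, y k := by
        gcongr
        exact Finset.single_le_sum hnonneg hj
      _ = y i := hyi.symm

theorem betaMap_mem_Vset (hEgt : ∀ S ∈ 𝒮, Egt S ⊆ S) (hy : y ∈ Uset F n 𝒮) :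
    betaMap F n 𝒮 Egt R y ∈ Vset F n 𝒮 Egt := by
  obtain ⟨S, hS, hpos, h0⟩ := hy
  refine ⟨S, hS, fun i hi => ?_, fun i hi => ?_⟩
  · rw [betaMap_apply_eq_self hS h0 (Or.inl hi)]
    exact h0 i hi
  · rw [betaMap_apply_eq_self hS h0 (Or.inr hi)]
    exact hpos i (hEgt S hS hi)

end Beta

theorem stmt13_general (F : Subfield ℝ) (n : ℕ) (𝒮 : Set (Set (Fin n)))
    (hempty : ∅ ∈ 𝒮)
    (hcup : ∀ S₁ ∈ 𝒮, ∀ S₂ ∈ 𝒮, S₁ ∪ S₂ ∈ 𝒮)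
    (Egt Estar : Set (Fin n) → Set (Fin n))
    (hpart : ∀ S ∈ 𝒮, Egt S ∩ Estar S = ∅ ∧ Egt S ∪ Estar S = S)
    (hRV1 : ∀ S₁ ∈ 𝒮, ∀ S₂ ∈ 𝒮,
      (S₁ ∪ S₂)ᶜ ∪ Egt (S₁ ∪ S₂) = (S₁ᶜ ∪ Egt S₁) ∩ (S₂ᶜ ∪ Egt S₂))
    (hRV2 : ∀ S₁ ∈ 𝒮, ∀ S₂ ∈ 𝒮, ¬ S₂ ⊆ S₁ → (Egt S₂ \ S₁).Nonempty) :
    Vset F n 𝒮 Egt =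
      ⋃ (R : F) (_ : 0 < R), ⋂ (R' : F) (_ : R < R'),
        betaMap F n 𝒮 Egt R' '' Uset F n 𝒮 := by
  ext x
  simp only [Set.mem_iUnion, Set.mem_iInter, Set.mem_image]
  constructor
  · rintro ⟨S, hS, hx0, hxpos⟩
    obtain ⟨a, ha⟩ := Filter.eventually_atTop.1 (eventually_forall_add_mul_pos x hxpos)
    refine ⟨max a 1, lt_max_of_lt_right one_pos, fun R hR => ?_⟩
    have hR0 : 0 ≤ R := (lt_max_of_lt_right one_pos).le.trans hR.le
    obtain ⟨y, hy⟩ := exists_betaMap_eq (𝒮 := 𝒮) (Egt := Egt) R x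
    exact ⟨y, mem_Uset_of_betaMap_eq hempty hcup hRV1 hRV2 hS hx0 hxpos hR0
      (ha R (le_max_left a 1 |>.trans hR.le)) hy, hy⟩
  · rintro ⟨R, -, hR⟩
    obtain ⟨y, hy, rfl⟩ := hR (R + 1) (lt_add_one R)
    exact betaMap_mem_Vset (fun S hS => Set.subset_union_left.trans (hpart S hS).2.subset) hy

/-- `V⁺ = ⋃_{R > 0} ⋂_{R' > R} β^{R'}(U⁺)`: every element of `V⁺` lies in `β^{R'}(U⁺)`
for all sufficiently large `R'`, and conversely. -/
theorem stmt13 (F : Subfield ℝ) (n : ℕ) (𝒮 : Set (Set (Fin n)))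
    (hempty : ∅ ∈ 𝒮) (huniv : Set.univ ∈ 𝒮)
    (hcup : ∀ S₁ ∈ 𝒮, ∀ S₂ ∈ 𝒮, S₁ ∪ S₂ ∈ 𝒮)
    (hcap : ∀ S₁ ∈ 𝒮, ∀ S₂ ∈ 𝒮, S₁ ∩ S₂ ∈ 𝒮)
    (Egt Estar : Set (Fin n) → Set (Fin n))
    (hpart : ∀ S ∈ 𝒮, Egt S ∩ Estar S = ∅ ∧ Egt S ∪ Estar S = S)
    (hRV1 : ∀ S₁ ∈ 𝒮, ∀ S₂ ∈ 𝒮,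
      (S₁ ∪ S₂)ᶜ ∪ Egt (S₁ ∪ S₂) = (S₁ᶜ ∪ Egt S₁) ∩ (S₂ᶜ ∪ Egt S₂))
    (hRV2 : ∀ S₁ ∈ 𝒮, ∀ S₂ ∈ 𝒮, ¬ S₂ ⊆ S₁ → (Egt S₂ \ S₁).Nonempty) :
    Vset F n 𝒮 Egt =
      ⋃ (R : F) (_ : 0 < R), ⋂ (R' : F) (_ : R < R'),
        betaMap F n 𝒮 Egt R' '' Uset F n 𝒮 :=
  stmt13_general F n 𝒮 hempty hcup Egt Estar hpart hRV1 hRV2
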